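/- arXiv:1306.1825 — 2 statements merged into one kernel-verified Lean document; each statement's English description precedes it below -/
import Mathlib

section
/- With notation as above (orthonormal a_k, u_k, k = 1..r, all 2r vectors pairwise orthogonal), the product ∏_{k=1}^r (cos θ_k • 1 + sin θ_k • ι(a_k)ι(u_k)) has scalar part (projection to grade 0) equal to ∏_{k=1}^r cos θ_k. -/
/-!
Expanding the product, every term except `∏ cos θ_k • 1` is a scalar multiple of a product of
distinct, pairwise orthogonal vectors. For orthogonal vectors the contraction terms in
`equivExterior` vanish, so such a Clifford product is sent to the corresponding wedge product,
which lies in positive exterior degree and has no scalar part. The induction peels off one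
factor at a time, remembering the vectors already chosen as a prefix `w`.
-/

open scoped RealInnerProductSpace

open CliffordAlgebra

theorem ExteriorAlgebra.list_prod_map_ι_mem_exteriorPower {R M : Type*} [CommRing R]
    [AddCommGroup M] [Module R M] (l : List M) :
    (l.map (ExteriorAlgebra.ι R)).prod ∈ ⋀[R]^l.length M := by
  simpa using SetLike.list_prod_map_mem_graded (A := fun i : ℕ => ⋀[R]^i M) l (fun _ => 1) _
    fun m _ => by simpa only [pow_one] using LinearMap.mem_range_self _ m

namespace CliffordAlgebra

variable {R M : Type*} [CommRing R] [AddCommGroup M] [Module R M]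

theorem contractLeft_list_prod_map_ι_eq_zero {Q : QuadraticForm R M} (d : Module.Dual R M) :
    ∀ l : List M, (∀ v ∈ l, d v = 0) → contractLeft (Q := Q) d (l.map (ι Q)).prod = 0
  | [], _ => contractLeft_one Q d
  | v :: l, h => by
    rw [List.map_cons, List.prod_cons, contractLeft_ι_mul,
      contractLeft_list_prod_map_ι_eq_zero d l fun x hx => h x (List.mem_cons_of_mem _ hx),
      h v List.mem_cons_self, zero_smul, mul_zero, sub_zero]

theorem changeForm_list_prod_map_ι {Q Q' : QuadraticForm R M} {B : LinearMap.BilinForm R M}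
    (h : B.toQuadraticMap = Q' - Q) :
    ∀ l : List M, l.Pairwise (fun x y => B x y = 0) →
      changeForm h (l.map (ι Q)).prod = (l.map (ι Q')).prod
  | [], _ => changeForm_one h
  | v :: l, hl => by
    rw [List.pairwise_cons] at hl
    rw [List.map_cons, List.prod_cons, changeForm_ι_mul, changeForm_list_prod_map_ι h l hl.2,
      contractLeft_list_prod_map_ι_eq_zero _ l hl.1, sub_zero, List.map_cons, List.prod_cons]

variable [Invertible (2 : R)] (Q : QuadraticForm R M)

theorem equivExterior_one : equivExterior Q 1 = 1 :=
  changeForm_one changeForm.associated_neg_proof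

theorem equivExterior_list_prod_map_ι {l : List M} (hl : l.Pairwise Q.IsOrtho) :
    equivExterior Q (l.map (ι Q)).prod = (l.map (ExteriorAlgebra.ι R)).prod :=
  changeForm_list_prod_map_ι changeForm.associated_neg_proof l <| hl.imp fun h => by
    rwa [map_neg, LinearMap.neg_apply, LinearMap.neg_apply, neg_eq_zero,
      QuadraticMap.associated_isOrtho]

def scalarPart : CliffordAlgebra Q →ₗ[R] ExteriorAlgebra R M :=
  GradedAlgebra.proj (fun i : ℕ => ⋀[R]^i M) 0 ∘ₗ (equivExterior Q).toLinearMap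

theorem scalarPart_one : scalarPart Q 1 = 1 := by
  rw [scalarPart, LinearMap.comp_apply, LinearEquiv.coe_coe, equivExterior_one,
    GradedAlgebra.proj_apply, DirectSum.decompose_of_mem_same _ SetLike.GradedOne.one_mem]

theorem scalarPart_list_prod_map_ι_eq_zero {l : List M} (hl : l.Pairwise Q.IsOrtho)
    (hne : l ≠ []) : scalarPart Q (l.map (ι Q)).prod = 0 := by
  rw [scalarPart, LinearMap.comp_apply, LinearEquiv.coe_coe, equivExterior_list_prod_map_ι Q hl,
    GradedAlgebra.proj_apply, DirectSum.decompose_of_mem_ne (fun i : ℕ => ⋀[R]^i M)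
      (ExteriorAlgebra.list_prod_map_ι_mem_exteriorPower l) (by simpa using hne)]

theorem scalarPart_list_prod_map_ι_mul_prod_ofFn {r : ℕ} (c s : Fin r → R) (a u : Fin r → M)
    (w : List M) (h : (w ++ (List.ofFn fun k => [a k, u k]).flatten).Pairwise Q.IsOrtho) :
    scalarPart Q ((w.map (ι Q)).prod *
      (List.ofFn fun k => c k • (1 : CliffordAlgebra Q) + s k • (ι Q (a k) * ι Q (u k))).prod) =
    (∏ k, c k) • scalarPart Q (w.map (ι Q)).prod := by
  induction r generalizing w with
  | zero => simp
  | succ r ih =>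
    set tail := List.ofFn fun k : Fin r =>
      c k.succ • (1 : CliffordAlgebra Q) + s k.succ • (ι Q (a k.succ) * ι Q (u k.succ))
    rw [List.ofFn_succ, List.flatten_cons] at h
    have h_skip : (w ++ (List.ofFn fun k : Fin r => [a k.succ, u k.succ]).flatten).Pairwise
        Q.IsOrtho := h.sublist ((List.sublist_append_right _ _).append_left w)
    have h_take : (w ++ [a 0, u 0] ++
        (List.ofFn fun k : Fin r => [a k.succ, u k.succ]).flatten).Pairwise Q.IsOrtho := by
      rwa [List.append_assoc]
    have h_expand : (w.map (ι Q)).prod *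
        ((c 0 • (1 : CliffordAlgebra Q) + s 0 • (ι Q (a 0) * ι Q (u 0))) * tail.prod) =
        c 0 • ((w.map (ι Q)).prod * tail.prod) +
          s 0 • (((w ++ [a 0, u 0]).map (ι Q)).prod * tail.prod) := by
      simp only [List.map_append, List.map_cons, List.map_nil, List.prod_append, List.prod_cons,
        List.prod_nil, mul_one, add_mul, mul_add, smul_mul_assoc, mul_smul_comm, one_mul,
        mul_assoc]
    rw [List.ofFn_succ, List.prod_cons, h_expand, map_add, map_smul, map_smul,
      ih _ _ _ _ _ h_skip, ih _ _ _ _ _ h_take,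
      scalarPart_list_prod_map_ι_eq_zero Q (h_take.sublist (List.sublist_append_left _ _))
        (by simp),
      smul_zero, smul_zero, add_zero, smul_smul, Fin.prod_univ_succ]

end CliffordAlgebra

theorem QuadraticMap.isOrtho_of_inner_eq_zero {V : Type*} [NormedAddCommGroup V]
    [InnerProductSpace ℝ V] {Q : QuadraticForm ℝ V} (hQ : ∀ v, Q v = ‖v‖ ^ 2) {x y : V}
    (h : ⟪x, y⟫ = 0) : Q.IsOrtho x y := by
  rw [QuadraticMap.isOrtho_def, hQ, hQ, hQ, pow_two, pow_two, pow_two]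
  exact (norm_add_sq_eq_norm_sq_add_norm_sq_iff_real_inner_eq_zero x y).mpr h

theorem List.pairwise_flatten_ofFn_pair {α : Type*} {r : ℕ} {Rel : α → α → Prop}
    (a u : Fin r → α) (h : _root_.Pairwise fun i j => Rel (Sum.elim a u i) (Sum.elim a u j)) :
    (List.ofFn fun k => [a k, u k]).flatten.Pairwise Rel := by
  rw [List.pairwise_flatten, List.pairwise_ofFn]
  refine ⟨?_, fun i j hij => ?_⟩
  · simpa using fun k => h Sum.inl_ne_inr
  · simpa using ⟨⟨h (Sum.inl_injective.ne hij.ne), h Sum.inl_ne_inr⟩, h Sum.inr_ne_inl,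
      h (Sum.inr_injective.ne hij.ne)⟩

/-- With `{a₁,u₁,…,a_r,u_r}` an orthonormal family of `2r` vectors, the ordered product
`∏ k (cos θ_k • 1 + sin θ_k • ι a_k ι u_k)` has scalar part (grade-0 projection, computed
via the canonical linear isomorphism with the graded exterior algebra) equal to
`∏ k cos θ_k`. -/
theorem stmt15 {V : Type*} [NormedAddCommGroup V] [InnerProductSpace ℝ V]
    (Q : QuadraticForm ℝ V) (hQ : ∀ v, Q v = ‖v‖ ^ 2)
    (r : ℕ) (a u : Fin r → V) (horth : Orthonormal ℝ (Sum.elim a u)) (θ : Fin r → ℝ) :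
    GradedAlgebra.proj (fun i : ℕ => ⋀[ℝ]^i V) 0
      (CliffordAlgebra.equivExterior Q
        ((List.ofFn fun k => Real.cos (θ k) • (1 : CliffordAlgebra Q) +
            Real.sin (θ k) • (CliffordAlgebra.ι Q (a k) * CliffordAlgebra.ι Q (u k))).prod)) =
    algebraMap ℝ (ExteriorAlgebra ℝ V) (∏ k, Real.cos (θ k)) := by
  have h_orth : (List.ofFn fun k => [a k, u k]).flatten.Pairwise Q.IsOrtho :=
    List.pairwise_flatten_ofFn_pair a u fun _ _ hij =>
      QuadraticMap.isOrtho_of_inner_eq_zero hQ (horth.2 hij)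
  have h_expand := scalarPart_list_prod_map_ι_mul_prod_ofFn Q (fun k => Real.cos (θ k))
    (fun k => Real.sin (θ k)) a u [] h_orth
  rw [List.map_nil, List.prod_nil, one_mul, scalarPart_one,
    ← Algebra.algebraMap_eq_smul_one] at h_expand
  exact h_expand
end

section
/- With {a₁,u₁,...,a_r,u_r} orthonormal, the product ∏_{k=1}^r (cos θ_k • 1 + sin θ_k • ι(a_k)ι(u_k)) has top-grade (grade 2r) component equal to (∏_{k=1}^r sin θ_k) • ι(a₁)ι(u₁)⋯ι(a_r)ι(u_r). -/
/-!
`equivExterior Q` is `changeForm` along `B = associated (-Q) = -⟪·, ·⟫`, and `changeForm` moves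
`ι v` past `x` up to the correction term `contractLeft (B v) x`. That term vanishes when `x` is
generated by vectors `B`-orthogonal to `v`, so for an orthonormal family each factor
`cos θ • 1 + sin θ • ι a * ι u` keeps its shape in the exterior algebra. There it has degree
at most `2` with degree-`2` part `sin θ • a ∧ u`, and the top-degree part of a product of such
elements is the product of their top-degree parts.
-/

open scoped RealInnerProductSpace

namespace GradedAlgebra

variable {R A : Type*} [CommSemiring R] [Semiring A] [Algebra R A]
  (𝒜 : ℕ → Submodule R A) [GradedAlgebra 𝒜]

theorem proj_mul_eq_zero_of_lt {x y : A} {m n k : ℕ}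
    (hx : ∀ i, m < i → proj 𝒜 i x = 0) (hy : ∀ j, n < j → proj 𝒜 j y = 0) (hk : m + n < k) :
    proj 𝒜 k (x * y) = 0 := by
  classical
  rw [proj_apply, DirectSum.decompose_mul, DirectSum.coe_mul_apply_eq_sum_antidiagonal]
  simp only [← proj_apply]
  refine Finset.sum_eq_zero fun ij hij => ?_
  rw [Finset.HasAntidiagonal.mem_antidiagonal] at hij
  rcases lt_or_ge m ij.1 with h | h
  · rw [hx _ h, zero_mul]
  · rw [hy _ (by omega), mul_zero]

theorem proj_add_mul {x y : A} {m n : ℕ}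
    (hx : ∀ i, m < i → proj 𝒜 i x = 0) (hy : ∀ j, n < j → proj 𝒜 j y = 0) :
    proj 𝒜 (m + n) (x * y) = proj 𝒜 m x * proj 𝒜 n y := by
  classical
  rw [proj_apply, DirectSum.decompose_mul, DirectSum.coe_mul_apply_eq_sum_antidiagonal]
  simp only [← proj_apply]
  refine Finset.sum_eq_single (m, n) (fun ⟨i, j⟩ hij hne => ?_) (by simp)
  rw [Finset.HasAntidiagonal.mem_antidiagonal] at hij
  rw [Ne, Prod.mk.injEq] at hne
  rcases lt_or_ge m i with h | h
  · rw [hx _ h, zero_mul]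
  · rw [hy _ (by omega), mul_zero]

theorem proj_list_prod_eq_zero_of_lt {l : List A} {k : ℕ}
    (hl : ∀ x ∈ l, ∀ i, k < i → proj 𝒜 i x = 0) {j : ℕ} (hj : l.length * k < j) :
    proj 𝒜 j l.prod = 0 := by
  induction l generalizing j with
  | nil =>
    rw [List.prod_nil, proj_apply,
      DirectSum.decompose_of_mem_ne 𝒜 SetLike.GradedOne.one_mem
        (by rw [List.length_nil, zero_mul] at hj; omega)]
  | cons x t ih =>
    simp only [List.mem_cons, forall_eq_or_imp] at hl
    exact proj_mul_eq_zero_of_lt 𝒜 hl.1 (fun i hi => ih hl.2 hi)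
      (by rw [List.length_cons] at hj; linarith)

theorem proj_length_mul_list_prod {l : List A} {k : ℕ}
    (hl : ∀ x ∈ l, ∀ i, k < i → proj 𝒜 i x = 0) :
    proj 𝒜 (l.length * k) l.prod = (l.map (proj 𝒜 k)).prod := by
  induction l with
  | nil =>
    rw [List.length_nil, zero_mul, List.prod_nil, List.map_nil, List.prod_nil, proj_apply,
      DirectSum.decompose_of_mem_same 𝒜 SetLike.GradedOne.one_mem]
  | cons x t ih =>
    simp only [List.mem_cons, forall_eq_or_imp] at hl
    rw [List.length_cons, add_one_mul, add_comm, List.prod_cons, List.map_cons, List.prod_cons,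
      proj_add_mul 𝒜 hl.1 fun i hi => proj_list_prod_eq_zero_of_lt 𝒜 hl.2 hi, ih hl.2]

end GradedAlgebra

namespace CliffordAlgebra

variable {R M : Type*} [CommRing R] [AddCommGroup M] [Module R M] {Q Q' : QuadraticForm R M}

theorem contractLeft_mul (d : Module.Dual R M) (x y : CliffordAlgebra Q) :
    contractLeft d (x * y) = contractLeft d x * y + involute x * contractLeft d y := by
  induction x using left_induction with
  | algebraMap r =>
    rw [contractLeft_algebraMap_mul, contractLeft_algebraMap, zero_mul, zero_add,
      involute.commutes]
  | add x x' hx hx' => simp only [add_mul, map_add, hx, hx']; abel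
  | ι_mul v x hx =>
    rw [mul_assoc, contractLeft_ι_mul, contractLeft_ι_mul, hx, map_mul, involute_ι]
    simp only [smul_mul_assoc, sub_mul, mul_add, neg_mul, mul_assoc]
    abel

theorem contractLeft_eq_zero_of_mem_adjoin {d : Module.Dual R M} {x : CliffordAlgebra Q}
    (hx : x ∈ Algebra.adjoin R (ι Q '' LinearMap.ker d)) : contractLeft d x = 0 := by
  induction hx using Algebra.adjoin_induction with
  | mem x hx =>
    obtain ⟨v, hv, rfl⟩ := hx
    rw [contractLeft_ι, LinearMap.mem_ker.mp hv, map_zero]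
  | algebraMap r => exact contractLeft_algebraMap Q d r
  | add x y _ _ hx hy => rw [map_add, hx, hy, add_zero]
  | mul x y _ _ hx hy => rw [contractLeft_mul, hx, hy, zero_mul, mul_zero, add_zero]

variable {B : LinearMap.BilinForm R M} (h : B.toQuadraticMap = Q' - Q)

theorem changeForm_ι_mul_of_mem_adjoin {v : M} {x : CliffordAlgebra Q}
    (hx : x ∈ Algebra.adjoin R (ι Q '' LinearMap.ker (B v))) :
    changeForm h (ι Q v * x) = ι Q' v * changeForm h x := by
  rw [changeForm_ι_mul, ← changeForm_contractLeft, contractLeft_eq_zero_of_mem_adjoin hx,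
    map_zero, sub_zero]

theorem list_prod_ofFn_mem_adjoin {r : ℕ} (c s : Fin r → R) (a u : Fin r → M) {S : Set M}
    (ha : ∀ k, a k ∈ S) (hu : ∀ k, u k ∈ S) :
    (List.ofFn fun k => c k • (1 : CliffordAlgebra Q) + s k • (ι Q (a k) * ι Q (u k))).prod ∈
      Algebra.adjoin R (ι Q '' S) := by
  have hι : ∀ v ∈ S, ι Q v ∈ Algebra.adjoin R (ι Q '' S) :=
    fun v hv => Algebra.subset_adjoin ⟨v, hv, rfl⟩
  refine Subalgebra.list_prod_mem _ fun x hx => ?_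
  obtain ⟨k, rfl⟩ := List.mem_ofFn.mp hx
  exact add_mem (Subalgebra.smul_mem _ (one_mem _) _)
    (Subalgebra.smul_mem _ (mul_mem (hι _ (ha k)) (hι _ (hu k))) _)

theorem changeForm_list_prod_ofFn {r : ℕ} (c s : Fin r → R) (a u : Fin r → M)
    (hB : B.IsOrthoᵢ (Sum.elim a u)) :
    changeForm h
        (List.ofFn fun k => c k • (1 : CliffordAlgebra Q) + s k • (ι Q (a k) * ι Q (u k))).prod =
      (List.ofFn fun k =>
        c k • (1 : CliffordAlgebra Q') + s k • (ι Q' (a k) * ι Q' (u k))).prod := by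
  induction r with
  | zero => simp [changeForm_one]
  | succ r ih =>
    have orth : ∀ i j, i ≠ j → B (Sum.elim a u i) (Sum.elim a u j) = 0 := hB
    have hB' : B.IsOrthoᵢ (Sum.elim (fun k : Fin r => a k.succ) fun k : Fin r => u k.succ) := by
      rw [← Function.comp_def a, ← Function.comp_def u, ← Sum.elim_comp_map]
      exact hB.comp_of_injective
        (Sum.map_injective.mpr ⟨Fin.succ_injective _, Fin.succ_injective _⟩)
    rw [List.ofFn_succ, List.prod_cons, List.ofFn_succ, List.prod_cons,
      ← ih (fun k : Fin r => c k.succ) (fun k : Fin r => s k.succ) _ _ hB']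
    set T := (List.ofFn fun k : Fin r =>
      c k.succ • (1 : CliffordAlgebra Q) + s k.succ • (ι Q (a k.succ) * ι Q (u k.succ))).prod
    have hT : ∀ i, (∀ k : Fin r, i ≠ .inl k.succ ∧ i ≠ .inr k.succ) →
        T ∈ Algebra.adjoin R (ι Q '' LinearMap.ker (B (Sum.elim a u i))) :=
      fun i hi => list_prod_ofFn_mem_adjoin _ _ _ _ (fun k => orth _ _ (hi k).1)
        (fun k => orth _ _ (hi k).2)
    have hfresh : ∀ k : Fin r, (0 : Fin (r + 1)) ≠ k.succ := fun k => (Fin.succ_ne_zero k).symm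
    have huT : ι Q (u 0) * T ∈ Algebra.adjoin R (ι Q '' LinearMap.ker (B (a 0))) :=
      mul_mem (Algebra.subset_adjoin ⟨u 0, orth (.inl 0) (.inr 0) Sum.inl_ne_inr, rfl⟩)
        (hT (.inl 0) fun k => ⟨by simpa using hfresh k, Sum.inl_ne_inr⟩)
    calc changeForm h ((c 0 • 1 + s 0 • (ι Q (a 0) * ι Q (u 0))) * T)
        = c 0 • changeForm h T + s 0 • changeForm h (ι Q (a 0) * (ι Q (u 0) * T)) := by
          simp only [add_mul, smul_mul_assoc, one_mul, mul_assoc, map_add, map_smul]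
      _ = c 0 • changeForm h T + s 0 • (ι Q' (a 0) * (ι Q' (u 0) * changeForm h T)) := by
          rw [changeForm_ι_mul_of_mem_adjoin h huT, changeForm_ι_mul_of_mem_adjoin h (v := u 0)
            (hT (.inr 0) fun k => ⟨Sum.inr_ne_inl, by simpa using hfresh k⟩)]
      _ = (c 0 • 1 + s 0 • (ι Q' (a 0) * ι Q' (u 0))) * changeForm h T := by
          simp only [add_mul, smul_mul_assoc, one_mul, mul_assoc]

end CliffordAlgebra

namespace ExteriorAlgebra

variable {R M : Type*} [CommRing R] [AddCommGroup M] [Module R M]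

theorem ι_mul_ι_mem_exteriorPower_two (a u : M) : ι R a * ι R u ∈ ⋀[R]^2 M := by
  have hι : ∀ v, ι R v ∈ ⋀[R]^1 M := fun v => by
    rw [exteriorPower, pow_one]
    exact LinearMap.mem_range_self _ v
  exact SetLike.mul_mem_graded (A := fun i : ℕ => ⋀[R]^i M) (hι a) (hι u)

theorem proj_smul_one_add_smul_ι_mul_ι_of_two_lt (c s : R) (a u : M) {k : ℕ} (hk : 2 < k) :
    GradedAlgebra.proj (fun i : ℕ => ⋀[R]^i M) k (c • 1 + s • (ι R a * ι R u)) = 0 := by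
  rw [map_add, map_smul, map_smul, GradedAlgebra.proj_apply, GradedAlgebra.proj_apply,
    DirectSum.decompose_of_mem_ne (fun i : ℕ => ⋀[R]^i M) SetLike.GradedOne.one_mem (by omega),
    DirectSum.decompose_of_mem_ne (fun i : ℕ => ⋀[R]^i M) (ι_mul_ι_mem_exteriorPower_two a u)
      (by omega),
    smul_zero, smul_zero, add_zero]

theorem proj_two_smul_one_add_smul_ι_mul_ι (c s : R) (a u : M) :
    GradedAlgebra.proj (fun i : ℕ => ⋀[R]^i M) 2 (c • 1 + s • (ι R a * ι R u)) =
      s • (ι R a * ι R u) := by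
  rw [map_add, map_smul, map_smul, GradedAlgebra.proj_apply, GradedAlgebra.proj_apply,
    DirectSum.decompose_of_mem_ne (fun i : ℕ => ⋀[R]^i M) SetLike.GradedOne.one_mem (by omega),
    DirectSum.decompose_of_mem_same (fun i : ℕ => ⋀[R]^i M) (ι_mul_ι_mem_exteriorPower_two a u),
    smul_zero, zero_add]

end ExteriorAlgebra

theorem List.prod_ofFn_smul {R A : Type*} [CommSemiring R] [Semiring A] [Algebra R A] {r : ℕ}
    (s : Fin r → R) (w : Fin r → A) :
    (List.ofFn fun k => s k • w k).prod = (∏ k, s k) • (List.ofFn w).prod := by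
  induction r with
  | zero => simp
  | succ r ih =>
    rw [List.ofFn_succ, List.prod_cons, ih, Fin.prod_univ_succ, List.ofFn_succ (f := w),
      List.prod_cons, smul_mul_smul_comm]

theorem QuadraticMap.associated_eq_inner {V : Type*} [NormedAddCommGroup V]
    [InnerProductSpace ℝ V] {Q : QuadraticForm ℝ V} (hQ : ∀ v, Q v = ‖v‖ ^ 2) (v w : V) :
    QuadraticMap.associated Q v w = ⟪v, w⟫ := by
  rw [QuadraticMap.associated_apply, hQ, hQ, hQ, norm_add_sq_real]
  norm_num
  ring

/-- With `{a₁,u₁,…,a_r,u_r}` an orthonormal family of `2r` vectors, the ordered product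
`∏ k (cos θ_k • 1 + sin θ_k • ι a_k ι u_k)` has top-grade (grade `2r`) component
(computed via the canonical linear grade decomposition through the exterior algebra)
equal to `(∏ k sin θ_k) • ι a₁ ι u₁ ⋯ ι a_r ι u_r`. -/
theorem stmt16 {V : Type*} [NormedAddCommGroup V] [InnerProductSpace ℝ V]
    (Q : QuadraticForm ℝ V) (hQ : ∀ v, Q v = ‖v‖ ^ 2)
    (r : ℕ) (a u : Fin r → V) (horth : Orthonormal ℝ (Sum.elim a u)) (θ : Fin r → ℝ) :
    GradedAlgebra.proj (fun i : ℕ => ⋀[ℝ]^i V) (2 * r)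
      (CliffordAlgebra.equivExterior Q
        ((List.ofFn fun k => Real.cos (θ k) • (1 : CliffordAlgebra Q) +
            Real.sin (θ k) • (CliffordAlgebra.ι Q (a k) * CliffordAlgebra.ι Q (u k))).prod)) =
    (∏ k, Real.sin (θ k)) • CliffordAlgebra.equivExterior Q
      ((List.ofFn fun k => CliffordAlgebra.ι Q (a k) * CliffordAlgebra.ι Q (u k)).prod) := by
  have hB : (QuadraticMap.associated (-Q)).IsOrthoᵢ (Sum.elim a u) :=
    LinearMap.isOrthoᵢ_def.mpr fun i j hij => by
      rw [map_neg, LinearMap.neg_apply, LinearMap.neg_apply, QuadraticMap.associated_eq_inner hQ,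
        horth.inner_eq_zero hij, neg_zero]
  have hexterior := fun c s : Fin r → ℝ => CliffordAlgebra.changeForm_list_prod_ofFn
    CliffordAlgebra.changeForm.associated_neg_proof c s a u hB
  have hwedge := hexterior 0 1
  simp only [Pi.zero_apply, zero_smul, Pi.one_apply, one_smul, zero_add] at hwedge
  have hproj := GradedAlgebra.proj_length_mul_list_prod (fun i : ℕ => ⋀[ℝ]^i V) (k := 2)
    (l := List.ofFn fun k => Real.cos (θ k) • (1 : ExteriorAlgebra ℝ V) +
      Real.sin (θ k) • (ExteriorAlgebra.ι ℝ (a k) * ExteriorAlgebra.ι ℝ (u k)))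
    (by
      simp only [List.forall_mem_ofFn_iff]
      exact fun k i hi => ExteriorAlgebra.proj_smul_one_add_smul_ι_mul_ι_of_two_lt _ _ _ _ hi)
  rw [List.length_ofFn, List.map_ofFn] at hproj
  simp only [Function.comp_def, ExteriorAlgebra.proj_two_smul_one_add_smul_ι_mul_ι] at hproj
  rw [CliffordAlgebra.equivExterior, CliffordAlgebra.changeFormEquiv_apply, hexterior,
    CliffordAlgebra.changeFormEquiv_apply, hwedge, mul_comm, hproj, List.prod_ofFn_smul]
end
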